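/- arXiv:2402.05155 — 2 statements merged into one kernel-verified Lean document; each statement's English description precedes it below -/
import Mathlib

section
/- In the shallow ANN setting, assume $\sigma$ is locally Lipschitz continuous and discriminatory for $\mu$, and assume $\sigma$ is constant on some nonempty open interval $(\alpha,\beta)$. Let $\mathfrak{H} \in \mathbb{N}_0$, set $n = \min\{\mathfrak{H}, \mathscr{K}\}$, and assume that for every $\width \in \{0,1,\dots,n\}$ a global minimizer of $\mathcal{L}_\width$ exists. Then there exist local minimum points $\vartheta_0,\dots,\vartheta_n \in \mathbb{R}^{\mathfrak{d}_{\mathfrak{H}}}$ of $\mathcal{L}_{\mathfrak{H}}$ with $\inf_{\xi \in \mathbb{R}} \int_{[a,b]^d}|f(x)-\xi|^2 d\mu \ge \mathcal{L}_{\mathfrak{H}}(\vartheta_0) > \mathcal{L}_{\mathfrak{H}}(\vartheta_1) > \cdots > \mathcal{L}_{\mathfrak{H}}(\vartheta_n) \ge 0$, and moreover $\mathcal{L}_{\mathfrak{H}}(\vartheta_\width) = \mathbf{m}_\width$ for each $\width$. -/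
open MeasureTheory Filter Topology

noncomputable section

def cube (d : ℕ) (a b : ℝ) : Set (Fin d → ℝ) :=
  Set.Icc (fun _ => a) (fun _ => b)

lemma widx {d H : ℕ} (i : Fin H) (j : Fin d) : i.1 * d + j.1 < d * H + 2 * H + 1 := by
  have hj := j.2
  have h1 : i.1 * d + j.1 < (i.1 + 1) * d := by rw [Nat.succ_mul]; omega
  have h2 : (i.1 + 1) * d ≤ H * d := Nat.mul_le_mul_right d i.2
  have h3 : H * d = d * H := Nat.mul_comm H d
  omega

/-- Realization function of a shallow ANN with `H` hidden neurons. -/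
def srel (d H : ℕ) (σ : ℝ → ℝ) (θ : Fin (d * H + 2 * H + 1) → ℝ) (x : Fin d → ℝ) : ℝ :=
  θ ⟨d * H + 2 * H, by omega⟩ +
    ∑ i : Fin H, θ ⟨d * H + H + i.1, by have := i.2; omega⟩ *
      σ (θ ⟨d * H + i.1, by have := i.2; omega⟩ +
        ∑ j : Fin d, θ ⟨i.1 * d + j.1, widx i j⟩ * x j)

/-- The risk (squared `L²` error against the target `f` over `[a,b]^d`). -/
def srisk (d H : ℕ) (a b : ℝ) (σ : ℝ → ℝ) (μ : Measure (Fin d → ℝ))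
    (f : (Fin d → ℝ) → ℝ) (θ : Fin (d * H + 2 * H + 1) → ℝ) : ℝ :=
  ∫ x in cube d a b, (srel d H σ θ x - f x) ^ 2 ∂μ


/-- Infimum of the risk over all parameter vectors of width `H`. -/
def sinf (d H : ℕ) (a b : ℝ) (σ : ℝ → ℝ) (μ : Measure (Fin d → ℝ))
    (f : (Fin d → ℝ) → ℝ) : ℝ :=
  ⨅ θ : Fin (d * H + 2 * H + 1) → ℝ, srisk d H a b σ μ f θ

/-- `σ` is discriminatory for the measure `μ` on `K` (Cybenko). -/
def Discriminatory (d : ℕ) (K : Set (Fin d → ℝ)) (μ : Measure (Fin d → ℝ))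
    (σ : ℝ → ℝ) : Prop :=
  ∀ φ : (Fin d → ℝ) → ℝ, Measurable φ →
    Integrable φ (μ.restrict K) →
    (∀ (w : Fin d → ℝ) (c : ℝ), ∫ x in K, σ ((∑ j, w j * x j) + c) * φ x ∂μ = 0) →
    ∫ x in K, |φ x| ∂μ = 0

/-! ### helpers -/

def wof (d H : ℕ) (θ : Fin (d * H + 2 * H + 1) → ℝ) (i : Fin H) (j : Fin d) : ℝ :=
  θ ⟨i.1 * d + j.1, widx i j⟩

def bof (d H : ℕ) (θ : Fin (d * H + 2 * H + 1) → ℝ) (i : Fin H) : ℝ :=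
  θ ⟨d * H + i.1, by have := i.2; omega⟩

def vof (d H : ℕ) (θ : Fin (d * H + 2 * H + 1) → ℝ) (i : Fin H) : ℝ :=
  θ ⟨d * H + H + i.1, by have := i.2; omega⟩

def cof (d H : ℕ) (θ : Fin (d * H + 2 * H + 1) → ℝ) : ℝ :=
  θ ⟨d * H + 2 * H, by omega⟩

lemma srel_eq (d H : ℕ) (σ : ℝ → ℝ) (θ : Fin (d * H + 2 * H + 1) → ℝ) (x : Fin d → ℝ) :
    srel d H σ θ x = cof d H θ +
      ∑ i : Fin H, vof d H θ i * σ (bof d H θ i + ∑ j : Fin d, wof d H θ i j * x j) := rfl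

def pack (d H : ℕ) (w : Fin H → Fin d → ℝ) (bi : Fin H → ℝ) (v : Fin H → ℝ) (c : ℝ) :
    Fin (d * H + 2 * H + 1) → ℝ := fun m =>
  if h1 : m.1 < d * H then
    w ⟨m.1 / d, Nat.div_lt_of_lt_mul h1⟩
      ⟨m.1 % d, Nat.mod_lt _ (Nat.pos_of_ne_zero (by rintro rfl; simp at h1))⟩
  else if h2 : m.1 < d * H + H then bi ⟨m.1 - d * H, by omega⟩
  else if h3 : m.1 < d * H + 2 * H then v ⟨m.1 - (d * H + H), by omega⟩
  else c

variable {d H : ℕ} {w : Fin H → Fin d → ℝ} {bi v : Fin H → ℝ} {c : ℝ}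

lemma wof_pack (hd : 0 < d) (i : Fin H) (j : Fin d) :
    wof d H (pack d H w bi v c) i j = w i j := by
  have h1 : i.1 * d + j.1 < d * H := by
    have hj := j.2
    have h2 : (i.1 + 1) * d ≤ H * d := Nat.mul_le_mul_right d i.2
    have : i.1 * d + j.1 < (i.1 + 1) * d := by rw [Nat.succ_mul]; omega
    have h3 : H * d = d * H := Nat.mul_comm H d
    omega
  unfold wof pack
  rw [dif_pos h1]
  have hdiv : (i.1 * d + j.1) / d = i.1 := by
    rw [mul_comm, Nat.mul_add_div hd, Nat.div_eq_of_lt j.2, Nat.add_zero]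
  have hmod : (i.1 * d + j.1) % d = j.1 := by
    rw [mul_comm, Nat.mul_add_mod, Nat.mod_eq_of_lt j.2]
  congr 1 <;> [exact Fin.ext hdiv; exact Fin.ext hmod]

lemma bof_pack (i : Fin H) : bof d H (pack d H w bi v c) i = bi i := by
  unfold bof pack
  rw [dif_neg (by simp only [Fin.val_mk]; omega),
    dif_pos (by simp only [Fin.val_mk]; have := i.2; omega)]
  congr 1; exact Fin.ext (by simp)

lemma vof_pack (i : Fin H) : vof d H (pack d H w bi v c) i = v i := by
  unfold vof pack
  rw [dif_neg (by simp only [Fin.val_mk]; omega), dif_neg (by simp only [Fin.val_mk]; omega),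
    dif_pos (by simp only [Fin.val_mk]; have := i.2; omega)]
  congr 1; exact Fin.ext (by simp)

lemma cof_pack : cof d H (pack d H w bi v c) = c := by
  unfold cof pack
  rw [dif_neg (by simp only [Fin.val_mk]; omega), dif_neg (by simp only [Fin.val_mk]; omega),
    dif_neg (by simp only [Fin.val_mk]; omega)]

lemma srel_pack (hd : 0 < d) (σ : ℝ → ℝ) (x : Fin d → ℝ) :
    srel d H σ (pack d H w bi v c) x =
      c + ∑ i : Fin H, v i * σ (bi i + ∑ j : Fin d, w i j * x j) := by
  rw [srel_eq, cof_pack]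
  congr 1
  refine Finset.sum_congr rfl fun i _ => ?_
  rw [vof_pack, bof_pack]
  have : ∑ j : Fin d, wof d H (pack d H w bi v c) i j * x j = ∑ j : Fin d, w i j * x j :=
    Finset.sum_congr rfl fun j _ => by rw [wof_pack hd]
  rw [this]


/-! ### risk basics -/

lemma cube_measurable (d : ℕ) (a b : ℝ) : MeasurableSet (cube d a b) :=
  measurableSet_Icc

lemma cube_compact (d : ℕ) (a b : ℝ) : IsCompact (cube d a b) :=
  isCompact_Icc

lemma srisk_nonneg (d H : ℕ) (a b : ℝ) (σ : ℝ → ℝ) (μ : Measure (Fin d → ℝ))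
    (f : (Fin d → ℝ) → ℝ) (θ : Fin (d * H + 2 * H + 1) → ℝ) :
    0 ≤ srisk d H a b σ μ f θ :=
  integral_nonneg fun x => sq_nonneg _

lemma sinf_le (d H : ℕ) (a b : ℝ) (σ : ℝ → ℝ) (μ : Measure (Fin d → ℝ))
    (f : (Fin d → ℝ) → ℝ) (θ : Fin (d * H + 2 * H + 1) → ℝ) :
    sinf d H a b σ μ f ≤ srisk d H a b σ μ f θ :=
  ciInf_le ⟨0, by rintro r ⟨θ', rfl⟩; exact srisk_nonneg d H a b σ μ f θ'⟩ θ

lemma sinf_nonneg' (d H : ℕ) (a b : ℝ) (σ : ℝ → ℝ) (μ : Measure (Fin d → ℝ))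
    (f : (Fin d → ℝ) → ℝ) : 0 ≤ sinf d H a b σ μ f :=
  le_ciInf fun θ => srisk_nonneg d H a b σ μ f θ

lemma srel_continuous (d H : ℕ) (σ : ℝ → ℝ) (hσ : Continuous σ)
    (θ : Fin (d * H + 2 * H + 1) → ℝ) : Continuous (srel d H σ θ) := by
  unfold srel
  refine continuous_const.add (continuous_finset_sum _ fun i _ => ?_)
  exact continuous_const.mul (hσ.comp (continuous_const.add
    (continuous_finset_sum _ fun j _ => continuous_const.mul (continuous_apply j))))

lemma integrable_on_cube (d : ℕ) (a b : ℝ) (μ : Measure (Fin d → ℝ)) [IsFiniteMeasure μ]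
    {g : (Fin d → ℝ) → ℝ} (hg : Measurable g) (C : ℝ)
    (hC : ∀ x ∈ cube d a b, |g x| ≤ C) :
    Integrable g (μ.restrict (cube d a b)) := by
  refine Integrable.mono' (integrable_const C) hg.aestronglyMeasurable ?_
  refine (ae_restrict_iff' (cube_measurable d a b)).2 (ae_of_all _ fun x hx => ?_)
  simpa using hC x hx

lemma bounded_on_cube (d : ℕ) (a b : ℝ) {g : (Fin d → ℝ) → ℝ} (hg : Continuous g) :
    ∃ C, ∀ x ∈ cube d a b, |g x| ≤ C := by
  obtain ⟨C, hC⟩ := (cube_compact d a b).exists_bound_of_continuousOn hg.continuousOn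
  exact ⟨C, fun x hx => by simpa using hC x hx⟩

/-! ### embedding -/

def projp (d k m : ℕ) (σ : ℝ → ℝ) (α : ℝ)
    (Θ : Fin (d * (k + m) + 2 * (k + m) + 1) → ℝ) : Fin (d * k + 2 * k + 1) → ℝ :=
  pack d k (fun i j => wof d (k + m) Θ (Fin.castAdd m i) j)
    (fun i => bof d (k + m) Θ (Fin.castAdd m i))
    (fun i => vof d (k + m) Θ (Fin.castAdd m i))
    (cof d (k + m) Θ + ∑ i : Fin m, vof d (k + m) Θ (Fin.natAdd k i) * σ α)

lemma srel_split (d : ℕ) (hd : 0 < d) (σ : ℝ → ℝ) (α : ℝ) (k m : ℕ)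
    (Θ : Fin (d * (k + m) + 2 * (k + m) + 1) → ℝ) (x : Fin d → ℝ)
    (hx : ∀ i : Fin m, σ (bof d (k + m) Θ (Fin.natAdd k i)
        + ∑ j : Fin d, wof d (k + m) Θ (Fin.natAdd k i) j * x j) = σ α) :
    srel d (k + m) σ Θ x = srel d k σ (projp d k m σ α Θ) x := by
  rw [srel_eq, projp, srel_pack hd]
  rw [Fin.sum_univ_add (f := fun i : Fin (k + m) =>
    vof d (k + m) Θ i * σ (bof d (k + m) Θ i + ∑ j : Fin d, wof d (k + m) Θ i j * x j))]
  have h2 : ∑ i : Fin m, vof d (k + m) Θ (Fin.natAdd k i) *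
      σ (bof d (k + m) Θ (Fin.natAdd k i)
        + ∑ j : Fin d, wof d (k + m) Θ (Fin.natAdd k i) j * x j)
      = ∑ i : Fin m, vof d (k + m) Θ (Fin.natAdd k i) * σ α :=
    Finset.sum_congr rfl fun i _ => by rw [hx i]
  rw [h2]; ring

lemma risk_eq_proj (d : ℕ) (hd : 0 < d) (a b : ℝ) (σ : ℝ → ℝ) (μ : Measure (Fin d → ℝ))
    (f : (Fin d → ℝ) → ℝ) (α β : ℝ) (hconst : ∀ x ∈ Set.Ioo α β, σ x = σ α) (k m : ℕ)
    (Θ : Fin (d * (k + m) + 2 * (k + m) + 1) → ℝ)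
    (hΘ : ∀ i : Fin m, ∀ x ∈ cube d a b,
      (bof d (k + m) Θ (Fin.natAdd k i)
        + ∑ j : Fin d, wof d (k + m) Θ (Fin.natAdd k i) j * x j) ∈ Set.Ioo α β) :
    srisk d (k + m) a b σ μ f Θ = srisk d k a b σ μ f (projp d k m σ α Θ) := by
  unfold srisk
  refine setIntegral_congr_fun (cube_measurable d a b) fun x hx => ?_
  rw [srel_split d hd σ α k m Θ x fun i => hconst _ (hΘ i x hx)]

lemma risk_ge_sinf (d : ℕ) (hd : 0 < d) (a b : ℝ) (σ : ℝ → ℝ) (μ : Measure (Fin d → ℝ))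
    (f : (Fin d → ℝ) → ℝ) (α β : ℝ) (hconst : ∀ x ∈ Set.Ioo α β, σ x = σ α) (k m : ℕ)
    (Θ : Fin (d * (k + m) + 2 * (k + m) + 1) → ℝ)
    (hΘ : ∀ i : Fin m, ∀ x ∈ cube d a b,
      (bof d (k + m) Θ (Fin.natAdd k i)
        + ∑ j : Fin d, wof d (k + m) Θ (Fin.natAdd k i) j * x j) ∈ Set.Ioo α β) :
    sinf d k a b σ μ f ≤ srisk d (k + m) a b σ μ f Θ := by
  rw [risk_eq_proj d hd a b σ μ f α β hconst k m Θ hΘ]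
  exact sinf_le d k a b σ μ f _

lemma embed_localmin (d : ℕ) (hd : 0 < d) (a b : ℝ) (σ : ℝ → ℝ)
    (μ : Measure (Fin d → ℝ)) (f : (Fin d → ℝ) → ℝ)
    (α β : ℝ) (hαβ : α < β) (hconst : ∀ x ∈ Set.Ioo α β, σ x = σ α)
    (k H : ℕ) (hkH : k ≤ H) (θ : Fin (d * k + 2 * k + 1) → ℝ)
    (hθ : srisk d k a b σ μ f θ = sinf d k a b σ μ f) :
    ∃ Θ : Fin (d * H + 2 * H + 1) → ℝ,
      IsLocalMin (srisk d H a b σ μ f) Θ ∧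
      srisk d H a b σ μ f Θ = sinf d k a b σ μ f := by
  obtain ⟨m, rfl⟩ := Nat.exists_eq_add_of_le hkH
  set γ := (α + β) / 2 with hγ
  set M := max |a| |b| with hM
  have hMa : |a| ≤ M := le_max_left _ _
  have hMb : |b| ≤ M := le_max_right _ _
  have hM0 : (0:ℝ) ≤ M := le_trans (abs_nonneg a) hMa
  have hden : (0:ℝ) < 1 + (d:ℝ) * M := by positivity
  set ε := (β - α) / (2 * (1 + (d:ℝ) * M)) with hε
  have hεpos : 0 < ε := div_pos (by linarith) (by positivity)
  have hεId : ε * (1 + (d:ℝ) * M) = (β - α) / 2 := by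
    rw [hε]; field_simp
  set Θ : Fin (d * (k + m) + 2 * (k + m) + 1) → ℝ :=
    pack d (k + m) (fun i j => if h : i.1 < k then wof d k θ ⟨i.1, h⟩ j else 0)
      (fun i => if h : i.1 < k then bof d k θ ⟨i.1, h⟩ else γ)
      (fun i => if h : i.1 < k then vof d k θ ⟨i.1, h⟩ else 0)
      (cof d k θ) with hΘdef
  have hbΘ : ∀ i : Fin m, bof d (k + m) Θ (Fin.natAdd k i) = γ := by
    intro i
    rw [hΘdef, bof_pack]
    exact dif_neg (by simp)
  have hwΘ : ∀ (i : Fin m) (j : Fin d), wof d (k + m) Θ (Fin.natAdd k i) j = 0 := by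
    intro i j
    rw [hΘdef, wof_pack hd]
    simp only [dif_neg (show ¬ (Fin.natAdd k i).1 < k by simp)]
  have hvΘ : ∀ i : Fin m, vof d (k + m) Θ (Fin.natAdd k i) = 0 := by
    intro i
    rw [hΘdef, vof_pack]
    exact dif_neg (by simp)
  -- everything in the ε-ball around Θ lands in the flat region
  have hball : ∀ Θ' ∈ Metric.ball Θ ε, ∀ i : Fin m, ∀ x ∈ cube d a b,
      (bof d (k + m) Θ' (Fin.natAdd k i)
        + ∑ j : Fin d, wof d (k + m) Θ' (Fin.natAdd k i) j * x j) ∈ Set.Ioo α β := by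
    intro Θ' hΘ' i x hx
    have hcoord : ∀ idx, |Θ' idx - Θ idx| < ε := by
      intro idx
      have h1 : dist (Θ' idx) (Θ idx) ≤ dist Θ' Θ := dist_le_pi_dist Θ' Θ idx
      have h2 : dist Θ' Θ < ε := Metric.mem_ball.1 hΘ'
      rw [Real.dist_eq] at h1
      linarith
    have hxj : ∀ j : Fin d, |x j| ≤ M := by
      intro j
      have h1 : a ≤ x j := hx.1 j
      have h2 : x j ≤ b := hx.2 j
      have := neg_abs_le a
      have := le_abs_self b
      exact abs_le.2 ⟨by linarith, by linarith⟩
    have hb' : |bof d (k + m) Θ' (Fin.natAdd k i) - γ| < ε := by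
      have := hcoord ⟨d * (k + m) + (Fin.natAdd k i).1,
        by have := (Fin.natAdd k i).2; omega⟩
      rw [show Θ ⟨d * (k + m) + (Fin.natAdd k i).1, by have := (Fin.natAdd k i).2; omega⟩
        = bof d (k + m) Θ (Fin.natAdd k i) from rfl, hbΘ i] at this
      exact this
    have hw' : ∀ j : Fin d, |wof d (k + m) Θ' (Fin.natAdd k i) j| ≤ ε := by
      intro j
      have := hcoord ⟨(Fin.natAdd k i).1 * d + j.1, widx (Fin.natAdd k i) j⟩
      rw [show Θ ⟨(Fin.natAdd k i).1 * d + j.1, widx (Fin.natAdd k i) j⟩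
        = wof d (k + m) Θ (Fin.natAdd k i) j from rfl, hwΘ i j, sub_zero] at this
      exact le_of_lt this
    have hsum : |∑ j : Fin d, wof d (k + m) Θ' (Fin.natAdd k i) j * x j| ≤ (d:ℝ) * (ε * M) := by
      calc |∑ j : Fin d, wof d (k + m) Θ' (Fin.natAdd k i) j * x j|
          ≤ ∑ j : Fin d, |wof d (k + m) Θ' (Fin.natAdd k i) j * x j| :=
            Finset.abs_sum_le_sum_abs _ _
        _ ≤ ∑ _j : Fin d, ε * M := by
            refine Finset.sum_le_sum fun j _ => ?_
            rw [abs_mul]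
            exact mul_le_mul (hw' j) (hxj j) (abs_nonneg _) (le_of_lt hεpos)
        _ = (d:ℝ) * (ε * M) := by
            rw [Finset.sum_const, Finset.card_univ, Fintype.card_fin, nsmul_eq_mul]
    have habs : |bof d (k + m) Θ' (Fin.natAdd k i)
        + ∑ j : Fin d, wof d (k + m) Θ' (Fin.natAdd k i) j * x j - γ| < (β - α) / 2 := by
      have h3 : |bof d (k + m) Θ' (Fin.natAdd k i)
          + ∑ j : Fin d, wof d (k + m) Θ' (Fin.natAdd k i) j * x j - γ|
          ≤ |bof d (k + m) Θ' (Fin.natAdd k i) - γ|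
            + |∑ j : Fin d, wof d (k + m) Θ' (Fin.natAdd k i) j * x j| := by
        rw [show bof d (k + m) Θ' (Fin.natAdd k i)
          + (∑ j : Fin d, wof d (k + m) Θ' (Fin.natAdd k i) j * x j) - γ
          = (bof d (k + m) Θ' (Fin.natAdd k i) - γ)
            + ∑ j : Fin d, wof d (k + m) Θ' (Fin.natAdd k i) j * x j by ring]
        exact abs_add_le _ _
      have h4 : ε + (d:ℝ) * (ε * M) = ε * (1 + (d:ℝ) * M) := by ring
      calc |bof d (k + m) Θ' (Fin.natAdd k i)
          + ∑ j : Fin d, wof d (k + m) Θ' (Fin.natAdd k i) j * x j - γ|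
          ≤ |bof d (k + m) Θ' (Fin.natAdd k i) - γ|
            + |∑ j : Fin d, wof d (k + m) Θ' (Fin.natAdd k i) j * x j| := h3
        _ < ε + (d:ℝ) * (ε * M) := by linarith
        _ = (β - α) / 2 := by rw [h4, hεId]
    have := abs_lt.1 habs
    constructor
    · rw [hγ] at this; linarith [this.1]
    · rw [hγ] at this; linarith [this.2]
  -- the risk value at Θ
  have hriskval : srisk d (k + m) a b σ μ f Θ = sinf d k a b σ μ f := by
    have hgood := hball Θ (Metric.mem_ball_self hεpos)
    rw [risk_eq_proj d hd a b σ μ f α β hconst k m Θ hgood]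
    have hproj : srel d k σ (projp d k m σ α Θ) = srel d k σ θ := by
      funext x
      rw [projp, srel_pack hd, srel_eq d k σ θ x]
      have hc : cof d (k + m) Θ + ∑ i : Fin m, vof d (k + m) Θ (Fin.natAdd k i) * σ α
          = cof d k θ := by
        rw [hΘdef, cof_pack]
        have : ∑ i : Fin m, vof d (k + m) Θ (Fin.natAdd k i) * σ α = 0 := by
          refine Finset.sum_eq_zero fun i _ => ?_
          rw [hvΘ i, zero_mul]
        rw [hΘdef] at this
        rw [this, add_zero]
      rw [hc]
      congr 1
      refine Finset.sum_congr rfl fun i _ => ?_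
      have hcast : (Fin.castAdd m i).1 < k := by simpa using i.2
      have hw : ∀ j : Fin d, wof d (k + m) Θ (Fin.castAdd m i) j = wof d k θ i j := by
        intro j
        rw [hΘdef, wof_pack hd, dif_pos hcast]
        congr 1
      have hb : bof d (k + m) Θ (Fin.castAdd m i) = bof d k θ i := by
        rw [hΘdef, bof_pack, dif_pos hcast]
        congr 1
      have hv : vof d (k + m) Θ (Fin.castAdd m i) = vof d k θ i := by
        rw [hΘdef, vof_pack, dif_pos hcast]
        congr 1
      have hss : ∑ j : Fin d, wof d (k + m) Θ (Fin.castAdd m i) j * x j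
          = ∑ j : Fin d, wof d k θ i j * x j :=
        Finset.sum_congr rfl fun j _ => by rw [hw j]
      rw [hb, hv, hss]
    unfold srisk
    rw [hproj]
    exact hθ
  refine ⟨Θ, ?_, hriskval⟩
  have hev : ∀ᶠ Θ' in 𝓝 Θ, srisk d (k + m) a b σ μ f Θ ≤ srisk d (k + m) a b σ μ f Θ' := by
    filter_upwards [Metric.ball_mem_nhds Θ hεpos] with Θ' hΘ'
    rw [hriskval]
    exact risk_ge_sinf d hd a b σ μ f α β hconst k m Θ' (hball Θ' hΘ')
  exact hev

/-! ### adding a neuron strictly decreases positive minimal risk -/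

lemma sinf_succ_lt (d : ℕ) (hd : 0 < d) (a b : ℝ) (σ : ℝ → ℝ)
    (hσc : Continuous σ) (μ : Measure (Fin d → ℝ)) [IsFiniteMeasure μ]
    (f : (Fin d → ℝ) → ℝ) (hf : Measurable f) (hfb : ∃ C, ∀ x, |f x| ≤ C)
    (hdisc : Discriminatory d (cube d a b) μ σ)
    (k : ℕ) (hzero : sinf d k a b σ μ f ≠ 0)
    (θ : Fin (d * k + 2 * k + 1) → ℝ) (hθ : srisk d k a b σ μ f θ = sinf d k a b σ μ f) :
    sinf d (k + 1) a b σ μ f < sinf d k a b σ μ f := by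
  set K := cube d a b with hK
  set r := srel d k σ θ with hr
  have hrc : Continuous r := srel_continuous d k σ hσc θ
  set φ : (Fin d → ℝ) → ℝ := fun x => r x - f x with hφ
  have hφm : Measurable φ := hrc.measurable.sub hf
  obtain ⟨Cf, hCf⟩ := hfb
  obtain ⟨Cr, hCr⟩ := bounded_on_cube d a b hrc
  have hφb : ∀ x ∈ K, |φ x| ≤ Cr + Cf := by
    intro x hx
    have h1 : |r x - f x| ≤ |r x| + |f x| := by
      simpa [sub_eq_add_neg] using abs_add_le (r x) (-(f x))
    have := hCr x hx
    have := hCf x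
    simp only [hφ]
    linarith
  have hφint : Integrable φ (μ.restrict K) :=
    integrable_on_cube d a b μ hφm (Cr + Cf) hφb
  have hφ2int : Integrable (fun x => φ x ^ 2) (μ.restrict K) := by
    refine integrable_on_cube d a b μ (hφm.pow_const 2) ((Cr + Cf) ^ 2) fun x hx => ?_
    rw [abs_pow]
    exact pow_le_pow_left₀ (abs_nonneg _) (hφb x hx) 2
  have hAval : ∫ x in K, φ x ^ 2 ∂μ = sinf d k a b σ μ f := hθ
  by_cases hI : ∀ (w : Fin d → ℝ) (c : ℝ), ∫ x in K, σ ((∑ j, w j * x j) + c) * φ x ∂μ = 0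
  · exfalso
    have h0 := hdisc φ hφm hφint hI
    have habs0 : (fun x => |φ x|) =ᵐ[μ.restrict K] 0 :=
      (integral_eq_zero_iff_of_nonneg_ae (ae_of_all _ fun x => abs_nonneg _) hφint.abs).1 h0
    have hφ20 : (fun x => φ x ^ 2) =ᵐ[μ.restrict K] 0 := by
      refine habs0.mono fun x hx => ?_
      have : φ x = 0 := abs_eq_zero.1 hx
      simp [this]
    have : ∫ x in K, φ x ^ 2 ∂μ = 0 := by rw [integral_congr_ae hφ20]; simp
    rw [hAval] at this
    exact hzero this
  · push_neg at hI
    obtain ⟨w, c, hIne⟩ := hI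
    set s : (Fin d → ℝ) → ℝ := fun x => σ (c + ∑ j, w j * x j) with hs
    have hseq : ∀ x : Fin d → ℝ, σ ((∑ j, w j * x j) + c) = s x := fun x => by
      rw [hs]; rw [add_comm]
    have hsc : Continuous s := by
      refine hσc.comp (continuous_const.add (continuous_finset_sum _ fun j _ => ?_))
      exact continuous_const.mul (continuous_apply j)
    have hsm : Measurable s := hsc.measurable
    obtain ⟨Cs, hCs⟩ := bounded_on_cube d a b hsc
    have hsφint : Integrable (fun x => s x * φ x) (μ.restrict K) := by
      refine integrable_on_cube d a b μ (hsm.mul hφm) (|Cs| * (Cr + Cf)) fun x hx => ?_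
      rw [abs_mul]
      refine mul_le_mul (le_trans (hCs x hx) (le_abs_self Cs)) (hφb x hx) (abs_nonneg _)
        (abs_nonneg _)
    have hs2int : Integrable (fun x => s x ^ 2) (μ.restrict K) := by
      refine integrable_on_cube d a b μ (hsm.pow_const 2) (Cs ^ 2) fun x hx => ?_
      rw [abs_pow]
      exact pow_le_pow_left₀ (abs_nonneg _) (hCs x hx) 2
    set I := ∫ x in K, s x * φ x ∂μ with hIdef
    set S := ∫ x in K, s x ^ 2 ∂μ with hSdef
    have hII : ∫ x in K, σ ((∑ j, w j * x j) + c) * φ x ∂μ = I := by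
      refine integral_congr_ae (ae_of_all _ fun x => ?_)
      show σ ((∑ j, w j * x j) + c) * φ x = s x * φ x
      rw [hseq x]
    have hI0 : I ≠ 0 := fun h => hIne (by rw [hII, h])
    have hSnn : 0 ≤ S := integral_nonneg fun x => sq_nonneg _
    have hSpos : 0 < S := by
      rcases hSnn.lt_or_eq with h | h
      · exact h
      · exfalso
        have hs20 : (fun x => s x ^ 2) =ᵐ[μ.restrict K] 0 :=
          (integral_eq_zero_iff_of_nonneg_ae (ae_of_all _ fun x => sq_nonneg _) hs2int).1 h.symm
        have hsφ0 : (fun x => s x * φ x) =ᵐ[μ.restrict K] 0 := by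
          refine hs20.mono fun x hx => ?_
          have hx' : s x ^ 2 = 0 := hx
          have : s x = 0 := by nlinarith [sq_nonneg (s x)]
          show s x * φ x = 0
          simp [this]
        exact hI0 (by rw [hIdef, integral_congr_ae hsφ0]; simp)
    -- width k+1 network realizing r + t·s
    have hreal : ∀ t : ℝ, ∃ Θ : Fin (d * (k + 1) + 2 * (k + 1) + 1) → ℝ,
        ∀ x : Fin d → ℝ, srel d (k + 1) σ Θ x = r x + t * s x := by
      intro t
      refine ⟨pack d (k + 1)
        (fun i j => if h : i.1 < k then wof d k θ ⟨i.1, h⟩ j else w j)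
        (fun i => if h : i.1 < k then bof d k θ ⟨i.1, h⟩ else c)
        (fun i => if h : i.1 < k then vof d k θ ⟨i.1, h⟩ else t)
        (cof d k θ), fun x => ?_⟩
      rw [srel_pack hd, hr, srel_eq d k σ θ x]
      rw [Fin.sum_univ_castSucc (f := fun i : Fin (k + 1) =>
        (if h : i.1 < k then vof d k θ ⟨i.1, h⟩ else t) *
          σ ((if h : i.1 < k then bof d k θ ⟨i.1, h⟩ else c) +
            ∑ j : Fin d, (if h : i.1 < k then wof d k θ ⟨i.1, h⟩ j else w j) * x j))]
      have h1 : ∀ i : Fin k,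
          (if h : (Fin.castSucc i).1 < k then vof d k θ ⟨(Fin.castSucc i).1, h⟩ else t) *
            σ ((if h : (Fin.castSucc i).1 < k then bof d k θ ⟨(Fin.castSucc i).1, h⟩ else c) +
              ∑ j : Fin d, (if h : (Fin.castSucc i).1 < k then wof d k θ ⟨(Fin.castSucc i).1, h⟩ j
                else w j) * x j)
          = vof d k θ i * σ (bof d k θ i + ∑ j : Fin d, wof d k θ i j * x j) := by
        intro i
        simp only [Fin.coe_castSucc, dif_pos i.2, Fin.eta]
      have h2 : (if h : (Fin.last k).1 < k then vof d k θ ⟨(Fin.last k).1, h⟩ else t) *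
            σ ((if h : (Fin.last k).1 < k then bof d k θ ⟨(Fin.last k).1, h⟩ else c) +
              ∑ j : Fin d, (if h : (Fin.last k).1 < k then wof d k θ ⟨(Fin.last k).1, h⟩ j
                else w j) * x j) = t * s x := by
        simp only [Fin.val_last, dif_neg (lt_irrefl k)]; rfl
      rw [Finset.sum_congr rfl fun i _ => h1 i, h2]
      ring
    -- expansion of the risk of the extended network
    have hexp : ∀ t : ℝ, ∫ x in K, (φ x + t * s x) ^ 2 ∂μ
        = sinf d k a b σ μ f + 2 * t * I + t ^ 2 * S := by
      intro t
      have e1 : ∫ x in K, (φ x + t * s x) ^ 2 ∂μ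
          = ∫ x in K, (φ x ^ 2 + ((2 * t) * (s x * φ x) + (t ^ 2) * (s x ^ 2))) ∂μ :=
        integral_congr_ae (ae_of_all _ fun x => by ring)
      have hg : Integrable (fun x => (2 * t) * (s x * φ x) + (t ^ 2) * (s x ^ 2))
          (μ.restrict K) := by
        exact (hsφint.const_mul (2 * t)).add (hs2int.const_mul (t ^ 2))
      rw [e1, integral_add hφ2int hg,
        integral_add (hsφint.const_mul (2 * t)) (hs2int.const_mul (t ^ 2)),
        integral_const_mul, integral_const_mul, hAval, ← hIdef, ← hSdef]
      ring
    obtain ⟨Θ, hΘ⟩ := hreal (-(I / S))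
    have hriskΘ : srisk d (k + 1) a b σ μ f Θ
        = sinf d k a b σ μ f - I ^ 2 / S := by
      unfold srisk
      have e2 : ∫ x in cube d a b, (srel d (k + 1) σ Θ x - f x) ^ 2 ∂μ
          = ∫ x in K, (φ x + (-(I / S)) * s x) ^ 2 ∂μ := by
        rw [← hK]
        refine integral_congr_ae (ae_of_all _ fun x => ?_)
        show (srel d (k + 1) σ Θ x - f x) ^ 2 = (φ x + (-(I / S)) * s x) ^ 2
        rw [hΘ x]
        have hφx : φ x = r x - f x := rfl
        rw [hφx]; ring
      rw [e2, hexp]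
      field_simp
      ring
    have hle := sinf_le d (k + 1) a b σ μ f Θ
    have hI2 : 0 < I ^ 2 := lt_of_le_of_ne (sq_nonneg I) (Ne.symm (pow_ne_zero 2 hI0))
    have : 0 < I ^ 2 / S := div_pos hI2 hSpos
    linarith [hle, hriskΘ]

lemma sinf_zero_le (d : ℕ) (a b : ℝ) (σ : ℝ → ℝ) (μ : Measure (Fin d → ℝ))
    (f : (Fin d → ℝ) → ℝ) (ξ : ℝ) :
    sinf d 0 a b σ μ f ≤ ∫ x in cube d a b, (f x - ξ) ^ 2 ∂μ := by
  have h := sinf_le d 0 a b σ μ f (fun _ => ξ)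
  have heq : srisk d 0 a b σ μ f (fun _ => ξ) = ∫ x in cube d a b, (f x - ξ) ^ 2 ∂μ := by
    unfold srisk
    refine integral_congr_ae (ae_of_all _ fun x => ?_)
    show (srel d 0 σ (fun _ => ξ) x - f x) ^ 2 = (f x - ξ) ^ 2
    have hx : srel d 0 σ (fun _ => ξ) x = ξ := by
      rw [srel_eq]; simp [cof]
    rw [hx]; ring
  rw [heq] at h
  exact h

end

/-- Hierarchical structure of local minima: with `n = min {𝓗, 𝒦}` (where `𝒦` is the
least width with zero infimum risk), assuming global minimizers exist for all widths
`k ≤ n`, there are `n + 1` local minimum points of the width-`𝓗` risk whose risk values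
equal `sinf d k …`, are strictly decreasing, bounded above by the best constant
approximation error, and nonnegative. -/
theorem stmt11 (d : ℕ) (hd : 0 < d) (a b : ℝ) (hab : a ≤ b)
    (μ : Measure (Fin d → ℝ)) [IsFiniteMeasure μ]
    (f : (Fin d → ℝ) → ℝ) (hf : Measurable f) (hfb : ∃ C, ∀ x, |f x| ≤ C)
    (σ : ℝ → ℝ) (hσm : Measurable σ) (hσlip : LocallyLipschitz σ)
    (hdisc : Discriminatory d (cube d a b) μ σ)
    (α β : ℝ) (hαβ : α < β) (hconst : ∀ x ∈ Set.Ioo α β, σ x = σ α)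
    (𝓗 n : ℕ) (hn𝓗 : n ≤ 𝓗)
    (hlt : ∀ k < n, sinf d k a b σ μ f ≠ 0)
    (hminK : n = 𝓗 ∨ sinf d n a b σ μ f = 0)
    (hex : ∀ k ≤ n, ∃ θ : Fin (d * k + 2 * k + 1) → ℝ,
      srisk d k a b σ μ f θ = sinf d k a b σ μ f) :
    ∃ ϑ : Fin (n + 1) → (Fin (d * 𝓗 + 2 * 𝓗 + 1) → ℝ),
      (∀ k : Fin (n + 1), IsLocalMin (srisk d 𝓗 a b σ μ f) (ϑ k)) ∧
      (∀ k : Fin (n + 1), srisk d 𝓗 a b σ μ f (ϑ k) = sinf d k.1 a b σ μ f) ∧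
      srisk d 𝓗 a b σ μ f (ϑ 0) ≤ ⨅ ξ : ℝ, ∫ x in cube d a b, (f x - ξ) ^ 2 ∂μ ∧
      (∀ i j : Fin (n + 1), i < j →
        srisk d 𝓗 a b σ μ f (ϑ j) < srisk d 𝓗 a b σ μ f (ϑ i)) ∧
      0 ≤ srisk d 𝓗 a b σ μ f (ϑ (Fin.last n)) := by
  have hσc : Continuous σ := hσlip.continuous
  have main : ∀ k : ℕ, k ≤ n → ∃ Θ : Fin (d * 𝓗 + 2 * 𝓗 + 1) → ℝ,
      IsLocalMin (srisk d 𝓗 a b σ μ f) Θ ∧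
      srisk d 𝓗 a b σ μ f Θ = sinf d k a b σ μ f := by
    intro k hk
    obtain ⟨θ, hθ⟩ := hex k hk
    exact embed_localmin d hd a b σ μ f α β hαβ hconst k 𝓗 (le_trans hk hn𝓗) θ hθ
  choose Θf hΘ1 hΘ2 using main
  have hkle : ∀ k : Fin (n + 1), k.1 ≤ n := fun k => Nat.lt_succ_iff.mp k.2
  refine ⟨fun k => Θf k.1 (hkle k), fun k => hΘ1 k.1 (hkle k), fun k => hΘ2 k.1 (hkle k),
    ?_, ?_, ?_⟩
  · have h0 : srisk d 𝓗 a b σ μ f (Θf (0 : Fin (n + 1)).1 (hkle 0))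
        = sinf d (0 : Fin (n + 1)).1 a b σ μ f := hΘ2 _ _
    have hv0 : ((0 : Fin (n + 1)) : ℕ) = 0 := rfl
    rw [h0]
    rw [hv0]
    exact le_ciInf fun ξ => sinf_zero_le d a b σ μ f ξ
  · have step : ∀ k, k < n → sinf d (k + 1) a b σ μ f < sinf d k a b σ μ f := by
      intro k hk
      obtain ⟨θ, hθ⟩ := hex k (le_of_lt hk)
      exact sinf_succ_lt d hd a b σ hσc μ f hf hfb hdisc k (hlt k hk) θ hθ
    have hdec : ∀ j, j ≤ n → ∀ i, i < j → sinf d j a b σ μ f < sinf d i a b σ μ f := by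
      intro j
      induction j with
      | zero => intro _ i hi; omega
      | succ j ih =>
        intro hj i hi
        have hstep := step j (by omega)
        rcases Nat.lt_succ_iff_lt_or_eq.mp hi with h | h
        · exact lt_trans hstep (ih (by omega) i h)
        · subst h; exact hstep
    intro i j hij
    rw [hΘ2 i.1 (hkle i), hΘ2 j.1 (hkle j)]
    exact hdec j.1 (hkle j) i.1 hij
  · exact srisk_nonneg d 𝓗 a b σ μ f _
end

section
/- In the shallow ANN setting with $\sigma$ discriminatory for $\mu$, let $\width \in \mathbb{N}$ and suppose there exists a global minimizer $\theta \in \mathbb{R}^{\mathfrak{d}_{\width-1}}$ of $\mathcal{L}_{\width-1}$ with $\mathcal{L}_{\width-1}(\theta) = \mathbf{m}_{\width-1} > 0$. Then there exists $\varepsilon > 0$ such that every $\vartheta \in \mathbb{R}^{\mathfrak{d}_\width}$ with $\mathcal{L}_\width(\vartheta) < \mathbf{m}_\width + \varepsilon$ has no inactive neurons, i.e., $\mathcal{I}_\width^\vartheta = \emptyset$. -/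
open MeasureTheory Filter Topology

/-- The set of inactive neurons of a width-`H` shallow ANN parameter vector: neurons
whose activation output vanishes for every input in the cube `[a,b]^d`. -/
def inactive (d H : ℕ) (a b : ℝ) (σ : ℝ → ℝ)
    (ϑ : Fin (d * H + 2 * H + 1) → ℝ) : Set (Fin H) :=
  {i | ∀ x ∈ cube d a b,
    σ (ϑ ⟨d * H + i.1, by have := i.2; omega⟩ +
      ∑ j : Fin d, ϑ ⟨i.1 * d + j.1, widx i j⟩ * x j) = 0}

/-
Removing an inactive neuron does not change the realization on `[a,b]^d`, so every width-`(W+1)`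
network with an inactive neuron has risk at least `m_W`. Conversely, the residual `φ` of a
width-`W` minimizer has `∫ φ² = m_W > 0`, so `φ` is not a.e. zero and, `σ` being discriminatory,
some neuron `g` has `∫ g φ ≠ 0`; adding `t g` for a small `t` of the right sign then lowers the
risk, whence `m_{W+1} < m_W`. Hence `ε = m_W - m_{W+1}` works.
-/

section L2

variable {α : Type*} [MeasurableSpace α] {ν : Measure α}

/-- The one-dimensional least-squares step: `t ↦ ∫ (φ + t g)²` has derivative `2 ∫ g φ` at `0`. -/
lemma exists_integral_add_mul_sq_lt {φ g : α → ℝ} (hφ : MemLp φ 2 ν) (hg : MemLp g 2 ν)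
    (hgφ : ∫ x, g x * φ x ∂ν ≠ 0) :
    ∃ t : ℝ, ∫ x, (φ x + t * g x) ^ 2 ∂ν < ∫ x, φ x ^ 2 ∂ν := by
  set I := ∫ x, g x * φ x ∂ν
  set J := ∫ x, g x ^ 2 ∂ν
  have hJ : 0 ≤ J := integral_nonneg fun x => sq_nonneg _
  have hgφ_int : Integrable (fun x => g x * φ x) ν := hg.integrable_mul hφ
  have hexpand : ∀ t : ℝ,
      ∫ x, (φ x + t * g x) ^ 2 ∂ν = ∫ x, φ x ^ 2 ∂ν + (2 * t * I + t ^ 2 * J) := by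
    intro t
    have h₁ : Integrable (fun x => 2 * t * (g x * φ x)) ν := hgφ_int.const_mul _
    have h₂ : Integrable (fun x => t ^ 2 * g x ^ 2) ν := hg.integrable_sq.const_mul _
    have h₁₂ : Integrable (fun x => 2 * t * (g x * φ x) + t ^ 2 * g x ^ 2) ν := h₁.add h₂
    calc ∫ x, (φ x + t * g x) ^ 2 ∂ν
        = ∫ x, φ x ^ 2 + (2 * t * (g x * φ x) + t ^ 2 * g x ^ 2) ∂ν :=
          integral_congr_ae (ae_of_all _ fun x => by ring)
      _ = ∫ x, φ x ^ 2 ∂ν + (2 * t * I + t ^ 2 * J) := by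
          rw [integral_add hφ.integrable_sq h₁₂, integral_add h₁ h₂,
            integral_const_mul, integral_const_mul]
  refine ⟨-I / (J + 1), ?_⟩
  rw [hexpand]
  have hI2 : 0 < I ^ 2 := by positivity
  have hquad : 2 * (-I / (J + 1)) * I + (-I / (J + 1)) ^ 2 * J
      = -(I ^ 2 * (J + 2)) / (J + 1) ^ 2 := by
    field_simp
    ring
  have hneg : -(I ^ 2 * (J + 2)) / (J + 1) ^ 2 < 0 :=
    div_neg_of_neg_of_pos (by nlinarith) (by positivity)
  linarith

end L2

lemma Discriminatory.exists_integral_mul_ne_zero {d : ℕ} {K : Set (Fin d → ℝ)}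
    {μ : Measure (Fin d → ℝ)} {σ : ℝ → ℝ} (hdisc : Discriminatory d K μ σ)
    {φ : (Fin d → ℝ) → ℝ} (hφm : Measurable φ) (hφ : Integrable φ (μ.restrict K))
    (hpos : 0 < ∫ x in K, φ x ^ 2 ∂μ) :
    ∃ (w : Fin d → ℝ) (c : ℝ), ∫ x in K, σ (∑ j, w j * x j + c) * φ x ∂μ ≠ 0 := by
  by_contra! h
  have hφ0 : φ =ᵐ[μ.restrict K] 0 := by
    have := (integral_eq_zero_iff_of_nonneg (fun x => abs_nonneg (φ x)) hφ.abs).mp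
      (hdisc φ hφm hφ h)
    exact this.mono fun x hx => abs_eq_zero.mp hx
  have : ∫ x in K, φ x ^ 2 ∂μ = 0 := by
    rw [integral_congr_ae (g := fun _ => (0 : ℝ)) (hφ0.mono fun x hx => by simp [hx]),
      integral_zero]
  linarith

section Cube

variable {d : ℕ} {a b : ℝ}

lemma abs_le_of_mem_cube {x : Fin d → ℝ} (hx : x ∈ cube d a b) (j : Fin d) :
    |x j| ≤ max |a| |b| :=
  abs_le_max_abs_abs (hx.1 j) (hx.2 j)

lemma exists_abs_affine_le_on_cube (w : Fin d → ℝ) (c : ℝ) :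
    ∃ R, ∀ x ∈ cube d a b, |c + ∑ j, w j * x j| ≤ R := by
  refine ⟨|c| + ∑ j, |w j| * max |a| |b|, fun x hx => ?_⟩
  refine (abs_add_le _ _).trans (add_le_add le_rfl ?_)
  refine (Finset.abs_sum_le_sum_abs _ _).trans (Finset.sum_le_sum fun j _ => ?_)
  rw [abs_mul]
  exact mul_le_mul_of_nonneg_left (abs_le_of_mem_cube hx j) (abs_nonneg _)

lemma memLp_restrict_cube_of_abs_le {μ : Measure (Fin d → ℝ)} [IsFiniteMeasure μ]
    {g : (Fin d → ℝ) → ℝ} (hg : Measurable g) {C : ℝ} (hC : ∀ x ∈ cube d a b, |g x| ≤ C)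
    (p : ENNReal) : MemLp g p (μ.restrict (cube d a b)) :=
  MemLp.of_bound hg.aestronglyMeasurable C
    ((ae_restrict_iff' measurableSet_Icc).mpr (ae_of_all _ hC))

lemma memLp_activation {μ : Measure (Fin d → ℝ)} [IsFiniteMeasure μ] {σ : ℝ → ℝ}
    (hσm : Measurable σ) (hσb : ∀ r : ℝ, ∃ C, ∀ y : ℝ, |y| ≤ r → |σ y| ≤ C)
    (w : Fin d → ℝ) (c : ℝ) (p : ENNReal) :
    MemLp (fun x => σ (c + ∑ j, w j * x j)) p (μ.restrict (cube d a b)) := by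
  obtain ⟨R, hR⟩ := exists_abs_affine_le_on_cube (a := a) (b := b) w c
  obtain ⟨C, hC⟩ := hσb R
  exact memLp_restrict_cube_of_abs_le (by fun_prop) (fun x hx => hC _ (hR x hx)) p

end Cube

section Network

variable {d H : ℕ} {σ : ℝ → ℝ}

/-- Assemble a parameter vector from inner weights `w`, inner biases `β`, outer weights `v` and
outer bias `c`, in the layout used by `srel`. -/
def mkParams (d H : ℕ) (w : Fin H → Fin d → ℝ) (β v : Fin H → ℝ) (c : ℝ) :
    Fin (d * H + 2 * H + 1) → ℝ := fun k =>
  if h₁ : k.1 < d * H then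
    w ⟨k.1 / d, Nat.div_lt_of_lt_mul h₁⟩
      ⟨k.1 % d, Nat.mod_lt _ (Nat.pos_of_ne_zero fun h => by subst h; simp at h₁)⟩
  else if h₂ : k.1 < d * H + H then β ⟨k.1 - d * H, by omega⟩
  else if h₃ : k.1 < d * H + 2 * H then v ⟨k.1 - (d * H + H), by omega⟩
  else c

variable (w : Fin H → Fin d → ℝ) (β v : Fin H → ℝ) (c : ℝ)

lemma mkParams_weight (i : Fin H) (j : Fin d) :
    mkParams d H w β v c ⟨i.1 * d + j.1, widx i j⟩ = w i j := by
  have hj := j.2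
  have hdiv : (i.1 * d + j.1) / d = i.1 := by
    rw [mul_comm, Nat.mul_add_div (by omega), Nat.div_eq_of_lt hj, add_zero]
  have hmod : (i.1 * d + j.1) % d = j.1 := by
    rw [mul_comm, Nat.mul_add_mod, Nat.mod_eq_of_lt hj]
  have hlt : i.1 * d + j.1 < d * H := by
    have := Nat.mul_le_mul_right d (Nat.succ_le_of_lt i.2)
    rw [Nat.succ_mul] at this
    rw [mul_comm d H]
    omega
  simp only [mkParams, dif_pos hlt]
  congr 1 <;> exact Fin.ext ‹_›

lemma mkParams_bias (i : Fin H) :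
    mkParams d H w β v c ⟨d * H + i.1, by have := i.2; omega⟩ = β i := by
  have hi := i.2
  simp only [mkParams, dif_neg (show ¬ d * H + i.1 < d * H by omega),
    dif_pos (show d * H + i.1 < d * H + H by omega), Nat.add_sub_cancel_left]

lemma mkParams_outWeight (i : Fin H) :
    mkParams d H w β v c ⟨d * H + H + i.1, by have := i.2; omega⟩ = v i := by
  have hi := i.2
  simp only [mkParams, dif_neg (show ¬ d * H + H + i.1 < d * H by omega),
    dif_neg (show ¬ d * H + H + i.1 < d * H + H by omega),
    dif_pos (show d * H + H + i.1 < d * H + 2 * H by omega), Nat.add_sub_cancel_left]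

lemma mkParams_outBias : mkParams d H w β v c ⟨d * H + 2 * H, by omega⟩ = c := by
  simp only [mkParams, dif_neg (show ¬ d * H + 2 * H < d * H by omega),
    dif_neg (show ¬ d * H + 2 * H < d * H + H by omega), dif_neg (lt_irrefl _)]

lemma srel_mkParams (x : Fin d → ℝ) :
    srel d H σ (mkParams d H w β v c) x
      = c + ∑ i, v i * σ (β i + ∑ j, w i j * x j) := by
  simp only [srel, mkParams_outBias, mkParams_outWeight, mkParams_bias, mkParams_weight]

end Network

lemma exists_srel_eq_add_neuron {d H : ℕ} {σ : ℝ → ℝ} (θ : Fin (d * H + 2 * H + 1) → ℝ)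
    (w : Fin d → ℝ) (c t : ℝ) :
    ∃ ϑ : Fin (d * (H + 1) + 2 * (H + 1) + 1) → ℝ, ∀ x,
      srel d (H + 1) σ ϑ x = srel d H σ θ x + t * σ (∑ j, w j * x j + c) := by
  refine ⟨mkParams d (H + 1)
    (Fin.snoc (fun i j => θ ⟨i.1 * d + j.1, widx i j⟩) w)
    (Fin.snoc (fun i => θ ⟨d * H + i.1, by have := i.2; omega⟩) c)
    (Fin.snoc (fun i => θ ⟨d * H + H + i.1, by have := i.2; omega⟩) t)
    (θ ⟨d * H + 2 * H, by omega⟩), fun x => ?_⟩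
  rw [srel_mkParams, Fin.sum_univ_castSucc]
  simp only [Fin.snoc_castSucc, Fin.snoc_last, srel, add_comm c]
  ring

lemma exists_srel_eqOn_cube_of_mem_inactive {d H : ℕ} {a b : ℝ} {σ : ℝ → ℝ}
    {ϑ : Fin (d * (H + 1) + 2 * (H + 1) + 1) → ℝ} {i : Fin (H + 1)}
    (hi : i ∈ inactive d (H + 1) a b σ ϑ) :
    ∃ θ : Fin (d * H + 2 * H + 1) → ℝ,
      Set.EqOn (srel d H σ θ) (srel d (H + 1) σ ϑ) (cube d a b) := by
  refine ⟨mkParams d H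
    (fun k j => ϑ ⟨(i.succAbove k).1 * d + j.1, widx (i.succAbove k) j⟩)
    (fun k => ϑ ⟨d * (H + 1) + (i.succAbove k).1, by have := (i.succAbove k).2; omega⟩)
    (fun k => ϑ ⟨d * (H + 1) + (H + 1) + (i.succAbove k).1,
      by have := (i.succAbove k).2; omega⟩)
    (ϑ ⟨d * (H + 1) + 2 * (H + 1), by omega⟩), fun x hx => ?_⟩
  rw [srel_mkParams, srel, Fin.sum_univ_succAbove _ i, hi x hx, mul_zero, zero_add]

section Risk

variable {d H : ℕ} {a b : ℝ} {σ : ℝ → ℝ} {μ : Measure (Fin d → ℝ)} {f : (Fin d → ℝ) → ℝ}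

lemma sinf_le_srisk (θ : Fin (d * H + 2 * H + 1) → ℝ) :
    sinf d H a b σ μ f ≤ srisk d H a b σ μ f θ :=
  ciInf_le ⟨0, by rintro r ⟨θ', rfl⟩; exact integral_nonneg fun _ => sq_nonneg _⟩ θ

lemma sinf_le_srisk_of_mem_inactive {ϑ : Fin (d * (H + 1) + 2 * (H + 1) + 1) → ℝ}
    {i : Fin (H + 1)} (hi : i ∈ inactive d (H + 1) a b σ ϑ) :
    sinf d H a b σ μ f ≤ srisk d (H + 1) a b σ μ f ϑ := by
  obtain ⟨θ, hθ⟩ := exists_srel_eqOn_cube_of_mem_inactive hi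
  calc sinf d H a b σ μ f ≤ srisk d H a b σ μ f θ := sinf_le_srisk θ
    _ = srisk d (H + 1) a b σ μ f ϑ :=
      setIntegral_congr_fun measurableSet_Icc fun x hx => by rw [hθ hx]

lemma memLp_srel [IsFiniteMeasure μ] (hσm : Measurable σ)
    (hσb : ∀ r : ℝ, ∃ C, ∀ y : ℝ, |y| ≤ r → |σ y| ≤ C)
    (θ : Fin (d * H + 2 * H + 1) → ℝ) (p : ENNReal) :
    MemLp (srel d H σ θ) p (μ.restrict (cube d a b)) := by
  have hsum := memLp_finsetSum (μ := μ.restrict (cube d a b)) (p := p) Finset.univ fun i _ =>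
    (memLp_activation hσm hσb (fun j => θ ⟨i.1 * d + j.1, widx i j⟩)
      (θ ⟨d * H + i.1, by have := i.2; omega⟩) p).const_mul
      (θ ⟨d * H + H + i.1, by have := i.2; omega⟩)
  exact (memLp_const (θ ⟨d * H + 2 * H, by omega⟩)).add hsum

theorem sinf_succ_lt_of_srisk_eq_sinf [IsFiniteMeasure μ] (hf : Measurable f)
    (hfb : ∃ C, ∀ x, |f x| ≤ C) (hσm : Measurable σ)
    (hσb : ∀ r : ℝ, ∃ C, ∀ y : ℝ, |y| ≤ r → |σ y| ≤ C)
    (hdisc : Discriminatory d (cube d a b) μ σ) {θ : Fin (d * H + 2 * H + 1) → ℝ}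
    (hθ : srisk d H a b σ μ f θ = sinf d H a b σ μ f) (hpos : 0 < sinf d H a b σ μ f) :
    sinf d (H + 1) a b σ μ f < sinf d H a b σ μ f := by
  obtain ⟨Cf, hCf⟩ := hfb
  set φ := fun x => srel d H σ θ x - f x
  have hφ : MemLp φ 2 (μ.restrict (cube d a b)) :=
    (memLp_srel hσm hσb θ 2).sub
      (memLp_restrict_cube_of_abs_le hf (fun x _ => hCf x) 2)
  have hφm : Measurable φ := by
    have : Measurable (srel d H σ θ) := by unfold srel; fun_prop
    exact this.sub hf
  obtain ⟨w, c, hwc⟩ := hdisc.exists_integral_mul_ne_zero hφm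
    (hφ.integrable one_le_two) (hθ.trans_gt hpos)
  have hg : MemLp (fun x => σ (∑ j, w j * x j + c)) 2 (μ.restrict (cube d a b)) := by
    simpa only [add_comm c] using memLp_activation hσm hσb w c 2
  obtain ⟨t, ht⟩ := exists_integral_add_mul_sq_lt hφ hg hwc
  obtain ⟨ϑ, hϑ⟩ := exists_srel_eq_add_neuron (σ := σ) θ w c t
  calc sinf d (H + 1) a b σ μ f ≤ srisk d (H + 1) a b σ μ f ϑ := sinf_le_srisk ϑ
    _ = ∫ x in cube d a b, (φ x + t * σ (∑ j, w j * x j + c)) ^ 2 ∂μ := by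
      simp only [srisk, hϑ, φ]
      congr 1 with x
      ring
    _ < sinf d H a b σ μ f := hθ ▸ ht

end Risk

theorem stmt12_general (d : ℕ) (a b : ℝ)
    (μ : Measure (Fin d → ℝ)) [IsFiniteMeasure μ]
    (f : (Fin d → ℝ) → ℝ) (hf : Measurable f) (hfb : ∃ C, ∀ x, |f x| ≤ C)
    (σ : ℝ → ℝ) (hσm : Measurable σ)
    (hσb : ∀ r : ℝ, ∃ C, ∀ y : ℝ, |y| ≤ r → |σ y| ≤ C)
    (hdisc : Discriminatory d (cube d a b) μ σ)
    (W : ℕ) (θ : Fin (d * W + 2 * W + 1) → ℝ)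
    (hθ : srisk d W a b σ μ f θ = sinf d W a b σ μ f)
    (hpos : 0 < sinf d W a b σ μ f) :
    ∃ ε > (0 : ℝ), ∀ ϑ : Fin (d * (W + 1) + 2 * (W + 1) + 1) → ℝ,
      srisk d (W + 1) a b σ μ f ϑ < sinf d (W + 1) a b σ μ f + ε →
      inactive d (W + 1) a b σ ϑ = ∅ := by
  have hgap := sinf_succ_lt_of_srisk_eq_sinf hf hfb hσm hσb hdisc hθ hpos
  refine ⟨sinf d W a b σ μ f - sinf d (W + 1) a b σ μ f, sub_pos.mpr hgap, fun ϑ hϑ => ?_⟩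
  refine Set.eq_empty_of_forall_notMem fun i hi => ?_
  have hle := sinf_le_srisk_of_mem_inactive (μ := μ) (f := f) hi
  linarith

/-- If a global minimizer of the width-`W` risk exists with positive risk, then there is
`ε > 0` such that every width-`(W+1)` parameter vector with risk within `ε` of the
infimum risk has no inactive neurons. -/
theorem stmt12 (d : ℕ) (hd : 0 < d) (a b : ℝ) (hab : a ≤ b)
    (μ : Measure (Fin d → ℝ)) [IsFiniteMeasure μ]
    (f : (Fin d → ℝ) → ℝ) (hf : Measurable f) (hfb : ∃ C, ∀ x, |f x| ≤ C)
    (σ : ℝ → ℝ) (hσm : Measurable σ)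
    (hσb : ∀ r : ℝ, ∃ C, ∀ y : ℝ, |y| ≤ r → |σ y| ≤ C)
    (hdisc : Discriminatory d (cube d a b) μ σ)
    (W : ℕ) (θ : Fin (d * W + 2 * W + 1) → ℝ)
    (hθ : srisk d W a b σ μ f θ = sinf d W a b σ μ f)
    (hpos : 0 < sinf d W a b σ μ f) :
    ∃ ε > (0 : ℝ), ∀ ϑ : Fin (d * (W + 1) + 2 * (W + 1) + 1) → ℝ,
      srisk d (W + 1) a b σ μ f ϑ < sinf d (W + 1) a b σ μ f + ε →
      inactive d (W + 1) a b σ ϑ = ∅ :=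
  stmt12_general d a b μ f hf hfb σ hσm hσb hdisc W θ hθ hpos
end
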